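/- Let G be a loopless multigraph, let v ∈ V(G) be a vertex with deg_G(v) = ℓ ≥ 3, and let G' be obtained from G by a wheel-extension at v. Then the edge connectivity satisfies θ(G') ≥ min{θ(G), 3}. -/

import Mathlib

set_option autoImplicit false
set_option linter.unusedVariables false
set_option linter.unreachableTactic false
set_option linter.unusedTactic false

/-! ## Finite loopless multigraphs -/

/-- A finite loopless multigraph: finite vertex and edge types, each edge has an
unordered pair of distinct endpoints. -/
structure Multigraph : Type 1 where
  V : Type
  E : Type
  finV : Finite V
  finE : Finite E
  ends : E → Sym2 V
  loopless : ∀ e, ¬ (ends e).IsDiag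

attribute [instance] Multigraph.finV Multigraph.finE

namespace Multigraph

variable (G : Multigraph)

/-- The degree of a vertex: the number of incident edges (no loops exist). -/
noncomputable def degree (v : G.V) : ℕ :=
  Nat.card {e : G.E // v ∈ G.ends e}

/-- The underlying simple graph ("adjacency"). -/
def toSimpleGraph : SimpleGraph G.V where
  Adj x y := x ≠ y ∧ ∃ e, G.ends e = s(x, y)
  symm := ⟨by
    rintro x y ⟨hxy, e, he⟩
    exact ⟨hxy.symm, e, by rw [he, Sym2.eq_swap]⟩⟩
  loopless := ⟨fun x h => h.1 rfl⟩

/-- Connectivity of a multigraph. -/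
def Connected : Prop := G.toSimpleGraph.Connected

/-- `G` is `k`-(vertex-)connected: more than `k` vertices, and removing fewer than
`k` vertices leaves the graph connected. -/
def KConnected (k : ℕ) : Prop :=
  k < Nat.card G.V ∧
    ∀ S : Set G.V, Nat.card S < k → ((G.toSimpleGraph.induce (Sᶜ)).Connected)

/-- A multigraph is simple if distinct edges have distinct endpoint pairs. -/
def Simple : Prop := Function.Injective G.ends

/-- Delete a set of edges. -/
def deleteEdges (F : Set G.E) : Multigraph where
  V := G.V
  E := {e : G.E // e ∉ F}
  finV := G.finV
  finE := Subtype.finite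
  ends e := G.ends e.1
  loopless e := G.loopless e.1

/-- `G` is `k`-edge-connected. -/
def EdgeConnGE (k : ℕ) : Prop :=
  G.Connected ∧ ∀ F : Set G.E, Nat.card F < k → (G.deleteEdges F).Connected

/-- The edge connectivity `θ(G)`. -/
noncomputable def edgeConn : ℕ := sSup {k : ℕ | G.EdgeConnGE k}

/-- An edge is a bridge if deleting it disconnects its endpoints. -/
def IsBridge (e : G.E) : Prop :=
  ∃ x y : G.V, G.ends e = s(x, y) ∧
    ¬ (G.deleteEdges {e}).toSimpleGraph.Reachable x y

end Multigraph

/-- A subgraph relation between multigraphs: injections of vertices and edges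
compatible with endpoints. -/
structure Multigraph.SubgraphOf (G H : Multigraph) where
  vmap : G.V ↪ H.V
  emap : G.E ↪ H.E
  ends_eq : ∀ e : G.E, H.ends (emap e) = (G.ends e).map vmap

/-- Isomorphism of multigraphs. -/
structure Multigraph.Iso (G H : Multigraph) where
  veq : G.V ≃ H.V
  eeq : G.E ≃ H.E
  ends_eq : ∀ e : G.E, H.ends (eeq e) = (G.ends e).map veq

namespace Multigraph

/-! ## Darts, rotation systems, faces, planar embeddings -/

/-- A dart is an edge together with one of its endpoints. -/
abbrev Dart (G : Multigraph) : Type := {p : G.E × G.V // p.2 ∈ G.ends p.1}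

instance (G : Multigraph) : Finite G.Dart :=
  inferInstanceAs (Finite {p : G.E × G.V // p.2 ∈ G.ends p.1})

variable {G : Multigraph}

/-- The reversal of a dart: same edge, other endpoint. -/
noncomputable def dartFlip (d : G.Dart) : G.Dart :=
  ⟨(d.1.1, Sym2.Mem.other d.2), Sym2.other_mem d.2⟩

/-- A rotation system (combinatorial embedding): a permutation of the darts that fixes
the dart's vertex and acts with a single cycle on the darts at each vertex. -/
structure RotSystem (G : Multigraph) where
  rot : Equiv.Perm G.Dart
  vx_eq : ∀ d : G.Dart, (rot d).1.2 = d.1.2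
  vertex_cycle : ∀ d d' : G.Dart, d.1.2 = d'.1.2 → ∃ n : ℕ, (⇑rot)^[n] d = d'

/-- One step of the face-tracing permutation. -/
noncomputable def RotSystem.faceStep (R : RotSystem G) (d : G.Dart) : G.Dart :=
  R.rot (dartFlip d)

/-- Two darts lie on the same face iff they are related by iterating the face-tracing map. -/
noncomputable def RotSystem.faceSetoid (R : RotSystem G) : Setoid G.Dart :=
  Relation.EqvGen.setoid (fun a b => R.faceStep a = b)

/-- The faces (with at least one incident edge) of a rotation system. -/
noncomputable def RotSystem.FaceQ (R : RotSystem G) : Type := Quotient R.faceSetoid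

/-- The face containing (the corner after) a given dart. -/
noncomputable def RotSystem.faceOf (R : RotSystem G) (d : G.Dart) : R.FaceQ :=
  Quotient.mk R.faceSetoid d

/-- All faces: the dart-faces together with one face for each isolated vertex. -/
noncomputable def RotSystem.Face (R : RotSystem G) : Type :=
  R.FaceQ ⊕ {v : G.V // G.degree v = 0}

/-- Incidence between a face and a vertex. -/
noncomputable def RotSystem.FaceInc (R : RotSystem G) (f : R.Face) (v : G.V) : Prop :=
  match f with
  | .inl q => ∃ d : G.Dart, d.1.2 = v ∧ R.faceOf d = q
  | .inr x => x.1 = v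

/-- Incidence between a face and an edge. -/
noncomputable def RotSystem.FaceIncE (R : RotSystem G) (f : R.Face) (e : G.E) : Prop :=
  match f with
  | .inl q => ∃ d : G.Dart, d.1.1 = e ∧ R.faceOf d = q
  | .inr _ => False

/-- The number of faces of a rotation system. -/
noncomputable def RotSystem.numFaces (R : RotSystem G) : ℕ :=
  Nat.card R.FaceQ + Nat.card {v : G.V // G.degree v = 0}

/-- The number of connected components. -/
noncomputable def numComponents (G : Multigraph) : ℕ :=
  Nat.card G.toSimpleGraph.ConnectedComponent

/-- A planar embedding: a rotation system satisfying Euler's formula on every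
component (equivalently, the stated global identity, since the Euler genus of
every component is nonnegative). -/
structure PlanarEmbedding (G : Multigraph) extends RotSystem G where
  euler : Nat.card G.V + toRotSystem.numFaces = Nat.card G.E + 2 * numComponents G

/-- The dart map induced by a subgraph inclusion. -/
noncomputable def SubgraphOf.dmap {G H : Multigraph} (ι : G.SubgraphOf H) (d : G.Dart) :
    H.Dart :=
  ⟨(ι.emap d.1.1, ι.vmap d.1.2), by
    rw [ι.ends_eq]
    exact Sym2.mem_map.mpr ⟨d.1.2, d.2, rfl⟩⟩

/-- `RH` restricts to `RG` along the subgraph inclusion `ι`: the rotation of `G` is the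
first-return map of the rotation of `H` to the darts of `G`.  This is the formal sense in
which an embedding of a graph `H ⊇ G` extends a given embedding of `G`. -/
noncomputable def RestrictsTo {G H : Multigraph} (ι : G.SubgraphOf H)
    (RH : RotSystem H) (RG : RotSystem G) : Prop :=
  ∀ d : G.Dart, ∃ n : ℕ, 0 < n ∧ (⇑RH.rot)^[n] (ι.dmap d) = ι.dmap (RG.rot d) ∧
    ∀ m : ℕ, 0 < m → m < n → (⇑RH.rot)^[m] (ι.dmap d) ∉ Set.range ι.dmap

end Multigraph

open Multigraph

/-! ## Augmentation predicates -/

/-- `H` (with data) is a `3`-augmentation of `G`: a planar cubic simple supergraph. -/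
def Is3Aug (G H : Multigraph) : Prop :=
  H.Simple ∧ (∀ w : H.V, H.degree w = 3) ∧ Nonempty (PlanarEmbedding H) ∧
    Nonempty (G.SubgraphOf H)

/-- `G` has a `k`-connected `3`-augmentation (variable embedding setting). -/
def HasKConn3Aug (G : Multigraph) (k : ℕ) : Prop :=
  ∃ H : Multigraph, Is3Aug G H ∧ H.KConnected k

/-- `G` has a connected `3`-augmentation (variable embedding setting). -/
def HasConn3Aug (G : Multigraph) : Prop :=
  ∃ H : Multigraph, Is3Aug G H ∧ H.Connected

/-- `G`, with the planar embedding `emb`, has a `2`-connected `3`-augmentation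
extending `emb`. -/
def Has2Conn3AugExt (G : Multigraph) (emb : PlanarEmbedding G) : Prop :=
  ∃ (H : Multigraph) (ι : G.SubgraphOf H) (embH : PlanarEmbedding H),
    H.Simple ∧ (∀ w : H.V, H.degree w = 3) ∧ H.KConnected 2 ∧
      RestrictsTo ι embH.toRotSystem emb.toRotSystem
/-! ## Sub-multigraphs, components, blocks, edge colorings -/

namespace Multigraph

/-- A (combinatorial) subgraph of `G`: a set of vertices and a set of edges whose
endpoints all belong to the vertex set. -/
structure Subgr (G : Multigraph) where
  Vs : Set G.V
  Es : Set G.E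
  compat : ∀ e ∈ Es, ∀ v ∈ G.ends e, v ∈ Vs

/-- The multigraph determined by a combinatorial subgraph. -/
noncomputable def Subgr.toMultigraph {G : Multigraph} (X : Subgr G) : Multigraph where
  V := X.Vs
  E := X.Es
  finV := Subtype.finite
  finE := Subtype.finite
  ends e := (G.ends e.1).attachWith (fun v hv => X.compat e.1 e.2 v hv)
  loopless := by
    intro e h
    apply G.loopless e.1
    have h2 := (Sym2.isDiag_map Subtype.val_injective).mpr h
    rwa [Sym2.attachWith_map_subtypeVal] at h2

/-- The subgraph spanned by a set of edges. -/
def edgeSpan (G : Multigraph) (S : Set G.E) : Subgr G :=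
  ⟨{v | ∃ e ∈ S, v ∈ G.ends e}, S, fun e he v hv => ⟨e, he, hv⟩⟩

/-- The subgraph induced by a connected component. -/
noncomputable def componentSubgraph (G : Multigraph)
    (C : G.toSimpleGraph.ConnectedComponent) : Multigraph :=
  Subgr.toMultigraph
    ⟨{v | G.toSimpleGraph.connectedComponentMk v = C},
     {e | ∀ v ∈ G.ends e, G.toSimpleGraph.connectedComponentMk v = C},
     fun e he v hv => he v hv⟩

/-- A cut vertex: a vertex whose removal disconnects two vertices that were connected. -/
def IsCutVertex (X : Multigraph) (v : X.V) : Prop :=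
  ∃ (x y : X.V) (hx : x ≠ v) (hy : y ≠ v),
    X.toSimpleGraph.Reachable x y ∧
      ¬ (X.toSimpleGraph.induce {w | w ≠ v}).Reachable ⟨x, hx⟩ ⟨y, hy⟩

/-- `S` is the edge set of a block of `G`: an inclusion-maximal `2`-connected
subgraph, or a single bridge. -/
noncomputable def IsBlockSet (G : Multigraph) (S : Set G.E) : Prop :=
  ((edgeSpan G S).toMultigraph.KConnected 2 ∧
    ∀ S' : Set G.E, S ⊆ S' → (edgeSpan G S').toMultigraph.KConnected 2 → S' = S) ∨
  (∃ e : G.E, S = {e} ∧ G.IsBridge e)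

/-- The vertices covered by a set of edges. -/
def blockVerts (X : Multigraph) (S : Set X.E) : Set X.V := {v | ∃ e ∈ S, v ∈ X.ends e}

/-- The number of cut vertices of `X` lying in the block with edge set `S`. -/
noncomputable def nCutInBlock (X : Multigraph) (S : Set X.E) : ℕ :=
  Nat.card {x : X.V // x ∈ blockVerts X S ∧ IsCutVertex X x}

/-- A proper edge coloring with 3 colors. -/
def ThreeEdgeColorable (G : Multigraph) : Prop :=
  ∃ c : G.E → Fin 3, ∀ e e' : G.E, e ≠ e' →
    (∃ v : G.V, v ∈ G.ends e ∧ v ∈ G.ends e') → c e ≠ c e'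

end Multigraph
/-! ## Graph surgeries: adding edges, replacing vertices by gadgets -/

namespace Multigraph

/-- A helper: `pmap` of a non-diagonal pair along a function that is injective on the
relevant proofs is non-diagonal. -/
lemma pmap_not_isDiag {α β : Type*} {P : α → Prop} (f : ∀ a, P a → β)
    (hf : ∀ a ha b hb, f a ha = f b hb → a = b) :
    ∀ (z : Sym2 α) (h : ∀ a ∈ z, P a), ¬ z.IsDiag → ¬ (z.pmap f h).IsDiag := by
  intro z
  induction' z with a b
  intro h hz hd
  rw [Sym2.pmap_pair, Sym2.mk_isDiag_iff] at hd
  rw [Sym2.mk_isDiag_iff] at hz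
  exact hz (hf _ _ _ _ hd)

/-- Add a single new edge between two distinct vertices. -/
def addEdge (G : Multigraph) (u v : G.V) (h : u ≠ v) : Multigraph where
  V := G.V
  E := G.E ⊕ Unit
  finV := G.finV
  finE := inferInstance
  ends := Sum.elim G.ends fun _ => s(u, v)
  loopless := by
    rintro (e | e)
    · exact G.loopless e
    · simpa [Sym2.mk_isDiag_iff] using h

/-- The canonical inclusion of `G` into `G` with an added edge. -/
def addEdgeSub (G : Multigraph) (u v : G.V) (h : u ≠ v) :
    G.SubgraphOf (addEdge G u v h) where
  vmap := Function.Embedding.refl _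
  emap := ⟨Sum.inl, Sum.inl_injective⟩
  ends_eq := fun e => by
    change G.ends e = Sym2.map id (G.ends e)
    simp

/-- Add a path of length two between two distinct vertices, through a new vertex. -/
def addPath2 (G : Multigraph) (u v : G.V) (_h : u ≠ v) : Multigraph where
  V := G.V ⊕ Unit
  E := G.E ⊕ Fin 2
  finV := inferInstance
  finE := inferInstance
  ends := Sum.elim (fun e => (G.ends e).map Sum.inl)
    (fun i => if i = 0 then s(Sum.inl u, Sum.inr ()) else s(Sum.inl v, Sum.inr ()))
  loopless := by
    rintro (e | i)
    · intro hd
      exact G.loopless e ((Sym2.isDiag_map Sum.inl_injective).mp hd)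
    · by_cases h0 : i = 0 <;> simp [h0, Sym2.mk_isDiag_iff]

open Classical in
/-- Replace a vertex `w` by a gadget graph `K`, re-attaching the edges formerly
incident to `w` to the gadget vertices specified by `att`. -/
noncomputable def replaceVertex (G : Multigraph) (w : G.V) (K : Multigraph)
    (att : {e : G.E // w ∈ G.ends e} → K.V) : Multigraph where
  V := {x : G.V // x ≠ w} ⊕ K.V
  E := G.E ⊕ K.E
  finV := inferInstance
  finE := inferInstance
  ends := fun e =>
    match e with
    | .inl e =>
        if h : w ∈ G.ends e then
          s(Sum.inl ⟨Sym2.Mem.other h, Sym2.other_ne (G.loopless e) h⟩,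
            Sum.inr (att ⟨e, h⟩))
        else
          (G.ends e).pmap (fun x hx => Sum.inl ⟨x, fun hxw => h (hxw ▸ hx)⟩)
            (fun _ hx => hx)
    | .inr k => (K.ends k).map Sum.inr
  loopless := by
    rintro (e | k)
    all_goals dsimp only
    · by_cases h : w ∈ G.ends e
      · rw [dif_pos h]
        simp [Sym2.mk_isDiag_iff]
      · rw [dif_neg h]
        exact pmap_not_isDiag _ (fun a ha b hb hab => by simpa using hab)
          _ _ (G.loopless e)
    · intro hd
      exact K.loopless k ((Sym2.isDiag_map Sum.inr_injective).mp hd)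

/-- The diamond gadget: `K₄` minus one edge; vertices `0` and `1` have degree two. -/
def diamond : Multigraph where
  V := Fin 4
  E := Fin 5
  finV := inferInstance
  finE := inferInstance
  ends := ![s(0, 2), s(0, 3), s(1, 2), s(1, 3), s(2, 3)]
  loopless := by decide

/-- Replace a degree-2 vertex by the diamond gadget (four degree-3 vertices). -/
noncomputable def fixVertex (X : Multigraph) (w : X.V) (h : X.degree w = 2) : Multigraph :=
  replaceVertex X w diamond
    (fun e => Fin.castLE (by omega) ((Finite.equivFinOfCardEq h) e))

/-- The prism `C_{m+3} □ P₂` with one of its two cycles subdivided: `W_{m+3}`.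
The `Sum.inl` vertices are the subdivision vertices (the degree-2 vertices). -/
def wheelGadget (m : ℕ) : Multigraph where
  V := Fin (m + 3) ⊕ Fin (m + 3) × Fin 2
  E := Fin (m + 3) × Fin 4
  finV := inferInstance
  finE := inferInstance
  ends := fun p =>
    if p.2 = 0 then s(Sum.inl p.1, Sum.inr (p.1, 0))
    else if p.2 = 1 then s(Sum.inl p.1, Sum.inr (p.1 + 1, 0))
    else if p.2 = 2 then s(Sum.inr (p.1, 1), Sum.inr (p.1 + 1, 1))
    else s(Sum.inr (p.1, 0), Sum.inr (p.1, 1))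
  loopless := by
    intro p
    have hne : p.1 ≠ p.1 + 1 := by
      intro h
      have h1 : (0 : Fin (m + 3)) = 1 := by
        have := left_eq_add.mp h
        exact this.symm
      have := congrArg Fin.val h1
      simp [Fin.val_zero, Fin.val_one] at this
    by_cases h0 : p.2 = 0
    · simp [h0, Sym2.mk_isDiag_iff]
    · by_cases h1 : p.2 = 1
      · simp [h0, h1, Sym2.mk_isDiag_iff]
      · by_cases h2 : p.2 = 2
        · simp [h0, h1, h2, Sym2.mk_isDiag_iff, Prod.ext_iff, hne]
        · simp [h0, h1, h2, Sym2.mk_isDiag_iff, Prod.ext_iff]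

/-- The wheel-extension of `G` at the degree-`(m+3)` vertex `v`, given a bijection `φ`
between the edges at `v` and the subdivision vertices of `W_{m+3}`. -/
noncomputable def wheelExtension (G : Multigraph) (v : G.V) (m : ℕ)
    (φ : {e : G.E // v ∈ G.ends e} ≃ Fin (m + 3)) : Multigraph :=
  replaceVertex G v (wheelGadget m) (fun e => Sum.inl (φ e))

/-- `G'` is obtained from `G` by a wheel-extension at `v`. -/
noncomputable def IsWheelExtension (G : Multigraph) (v : G.V) (G' : Multigraph) : Prop :=
  ∃ (m : ℕ) (φ : {e : G.E // v ∈ G.ends e} ≃ Fin (m + 3)),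
    Nonempty (G'.Iso (wheelExtension G v m φ))

end Multigraph
/-! ## Subdivisions and pendant vertices; more surgeries -/

namespace Multigraph

lemma out_ne (G : Multigraph) (e : G.E) : (G.ends e).out.1 ≠ (G.ends e).out.2 := by
  intro h
  apply G.loopless e
  rw [← (G.ends e).out_eq]
  exact Sym2.mk_isDiag_iff.mpr h

/-- The `j`-th node on the subdivided edge `e` (where edge `e` is subdivided by
`k e` new vertices):  `j = 0` is one endpoint, `j = k e + 1` is the other endpoint,
the nodes in between are the subdivision vertices. -/
noncomputable def subdivNode (R : Multigraph) (k : R.E → ℕ) (e : R.E) (j : ℕ) :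
    R.V ⊕ (Σ e : R.E, Fin (k e)) :=
  if h0 : j = 0 then Sum.inl (R.ends e).out.1
  else if h : j ≤ k e then Sum.inr ⟨e, ⟨j - 1, by omega⟩⟩
  else Sum.inl (R.ends e).out.2

/-- The subdivision of `R` in which each edge `e` is subdivided by `k e` new vertices. -/
noncomputable def subdivision (R : Multigraph) (k : R.E → ℕ) : Multigraph where
  V := R.V ⊕ (Σ e : R.E, Fin (k e))
  E := Σ e : R.E, Fin (k e + 1)
  finV := inferInstance
  finE := inferInstance
  ends := fun p => s(subdivNode R k p.1 p.2.val, subdivNode R k p.1 (p.2.val + 1))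
  loopless := by
    intro p hd
    rw [Sym2.mk_isDiag_iff] at hd
    have hi : p.2.val ≤ k p.1 := Nat.lt_succ_iff.mp p.2.isLt
    unfold subdivNode at hd
    split_ifs at hd <;>
      first
        | omega
        | (simp only [Sum.inl.injEq] at hd; exact R.out_ne p.1 hd)
        | (simp only [Sum.inr.injEq, Sigma.mk.inj_iff, heq_eq_eq, Fin.mk.injEq,
            true_and] at hd; omega)
        | exact False.elim (by assumption)
        | simp at hd

/-- Attach a new pendant (degree-1) vertex to every subdivision vertex of the
subdivision of `R` given by `k`. -/
noncomputable def pendantSubdivision (R : Multigraph) (k : R.E → ℕ) : Multigraph where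
  V := (R.V ⊕ (Σ e : R.E, Fin (k e))) ⊕ (Σ e : R.E, Fin (k e))
  E := (Σ e : R.E, Fin (k e + 1)) ⊕ (Σ e : R.E, Fin (k e))
  finV := inferInstance
  finE := inferInstance
  ends := Sum.elim (fun p => ((subdivision R k).ends p).map Sum.inl)
    (fun st => s(Sum.inl (Sum.inr st), Sum.inr st))
  loopless := by
    rintro (p | st)
    · intro hd
      exact (subdivision R k).loopless p ((Sym2.isDiag_map Sum.inl_injective).mp hd)
    · simp [Sym2.mk_isDiag_iff]

/-- Delete the edge `e = xy` and attach two new pendant vertices `u` (to `x`) and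
`v` (to `y`); the construction producing the `uv`-graph in Lemma 4.5. -/
noncomputable def detachEdge (G : Multigraph) (e : G.E) (x y : G.V) : Multigraph where
  V := G.V ⊕ Fin 2
  E := {e' : G.E // e' ≠ e} ⊕ Fin 2
  finV := inferInstance
  finE := inferInstance
  ends := Sum.elim (fun e' => (G.ends e'.1).map Sum.inl)
    (fun i => if i = 0 then s(Sum.inr 0, Sum.inl x) else s(Sum.inr 1, Sum.inl y))
  loopless := by
    rintro (e' | i)
    · intro hd
      exact G.loopless e'.1 ((Sym2.isDiag_map Sum.inl_injective).mp hd)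
    · by_cases h0 : i = 0 <;> simp [h0, Sym2.mk_isDiag_iff]

/-- Add the edge `uv` and then replace each of `u`, `v` that now has degree `2`
by the diamond gadget.  (The graph `G⁺` of Lemma 4.7, first item.) -/
noncomputable def addEdgeFix (G : Multigraph) (u v : G.V) (h : u ≠ v) : Multigraph :=
  let H1 := addEdge G u v h
  let p : Σ' (H : Multigraph), H.V :=
    if hu : H1.degree u = 2 then ⟨fixVertex H1 u hu, Sum.inl ⟨v, h.symm⟩⟩
    else ⟨H1, v⟩
  if hv : p.1.degree p.2 = 2 then fixVertex p.1 p.2 hv else p.1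

/-- Add a path `u - w - v` of length two and then replace each of `u`, `v` that now
has degree `2` by the diamond gadget.  (The graph `G⁺` of Lemma 4.7, second item.) -/
noncomputable def addPath2Fix (G : Multigraph) (u v : G.V) (h : u ≠ v) : Multigraph :=
  let H1 := addPath2 G u v h
  let p : Σ' (H : Multigraph), H.V :=
    if hu : H1.degree (Sum.inl u) = 2 then
      ⟨fixVertex H1 (Sum.inl u) hu, Sum.inl ⟨Sum.inl v, fun hh => h.symm (Sum.inl.inj hh)⟩⟩
    else ⟨H1, Sum.inl v⟩
  if hv : p.1.degree p.2 = 2 then fixVertex p.1 p.2 hv else p.1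

end Multigraph
/-! ## Faces of an embedding: incidences, face subgraphs, connecting faces -/

namespace Multigraph

namespace RotSystem

variable {G : Multigraph} (R : RotSystem G)

lemma faceOf_faceStep (d : G.Dart) : R.faceOf (R.faceStep d) = R.faceOf d := by
  refine (Quotient.sound ?_).symm
  exact Relation.EqvGen.rel d (R.faceStep d) rfl

/-- The subgraph of `G` on the vertices and edges incident to the face `f`. -/
noncomputable def faceSubgr (f : R.Face) : Subgr G where
  Vs := {v | R.FaceInc f v}
  Es := {e | R.FaceIncE f e}
  compat := by
    intro e he v hv
    cases f with
    | inr x => exact False.elim he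
    | inl q =>
      obtain ⟨d, hde, hdq⟩ := he
      subst hde
      have hmem : v ∈ s(d.1.2, Sym2.Mem.other d.2) := by
        rw [Sym2.other_spec d.2]; exact hv
      rcases Sym2.mem_iff.mp hmem with h | h
      · exact ⟨d, h.symm, hdq⟩
      · refine ⟨R.rot (dartFlip d), ?_, ?_⟩
        · rw [R.vx_eq (dartFlip d)]
          exact h.symm
        · have : R.faceOf (R.faceStep d) = q := by
            rw [R.faceOf_faceStep]; exact hdq
          exact this

/-- The face graph `G_f`. -/
noncomputable def faceGraph (f : R.Face) : Multigraph := (R.faceSubgr f).toMultigraph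

/-- A connecting face: one incident to at least two connected components of `G`, or
the unique face incident to both sides of some bridge of `G`. -/
noncomputable def ConnectingFace (f : R.Face) : Prop :=
  (∃ x y : G.V, R.FaceInc f x ∧ R.FaceInc f y ∧
      G.toSimpleGraph.connectedComponentMk x ≠ G.toSimpleGraph.connectedComponentMk y) ∨
  (∃ e : G.E, G.IsBridge e ∧ ∃ d d' : G.Dart, d.1.1 = e ∧ d'.1.1 = e ∧ d.1.2 ≠ d'.1.2 ∧
      (Sum.inl (R.faceOf d) : R.Face) = f ∧ (Sum.inl (R.faceOf d') : R.Face) = f)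

end RotSystem

end Multigraph

/-! ## `uv`-graphs, inner augmentations, labels -/

open Multigraph

/-- `(G, u, v)` is a `uv`-graph: connected, subcubic, with two distinguished vertices
of degree at most two. -/
noncomputable def IsUVGraph (G : Multigraph) (u v : G.V) : Prop :=
  G.Connected ∧ (∀ w : G.V, G.degree w ≤ 3) ∧ G.degree u ≤ 2 ∧ G.degree v ≤ 2 ∧ u ≠ v

/-- An inner augmentation of the `uv`-graph `(G, u, v)` with the embedding `emb`
whose outer face is `outer`. -/
structure InnerAug (G : Multigraph) (u v : G.V) (emb : PlanarEmbedding G)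
    (outer : emb.toRotSystem.Face) where
  H : Multigraph
  conn : H.Connected
  ι : G.SubgraphOf H
  embH : PlanarEmbedding H
  outerH : embH.toRotSystem.Face
  /-- the embedding of `H` extends the given embedding of `G` -/
  ext : RestrictsTo ι embH.toRotSystem emb.toRotSystem
  /-- the outer face of `H` lies in the outer face of `G` -/
  outer_compat : ∀ d : G.Dart,
    (Sum.inl (embH.toRotSystem.faceOf (ι.dmap d)) : embH.toRotSystem.Face) = outerH →
    (Sum.inl (emb.toRotSystem.faceOf d) : emb.toRotSystem.Face) = outer
  u_outer : embH.toRotSystem.FaceInc outerH (ι.vmap u)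
  v_outer : embH.toRotSystem.FaceInc outerH (ι.vmap v)
  deg_u : H.degree (ι.vmap u) = G.degree u
  deg_v : H.degree (ι.vmap v) = G.degree v
  deg13 : ∀ w : H.V, w ≠ ι.vmap u → w ≠ ι.vmap v → H.degree w = 1 ∨ H.degree w = 3
  pendant_outer : ∀ w : H.V, H.degree w = 1 → embH.toRotSystem.FaceInc outerH w
  bridges : ∀ eH : H.E, H.IsBridge eH →
    (¬ ∃ eG : G.E, ι.emap eG = eH ∧ G.IsBridge eG) →
    ∃ x : H.V, x ∈ H.ends eH ∧ H.degree x = 1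

/-- The dart of the added `uv`-edge at `u`. -/
noncomputable def addEdgeDartL (G : Multigraph) (u v : G.V) (h : u ≠ v) :
    (addEdge G u v h).Dart :=
  ⟨(Sum.inr (), u), Sym2.mem_mk_left u v⟩

/-- The dart of the added `uv`-edge at `v`. -/
noncomputable def addEdgeDartR (G : Multigraph) (u v : G.V) (h : u ≠ v) :
    (addEdge G u v h).Dart :=
  ⟨(Sum.inr (), v), Sym2.mem_mk_right u v⟩

/-- `d(H, 𝓔_H) = (a, b)`: inserting the hypothetical edge `e_uv` from `u` to `v` into the
outer face of the embedding of `H` splits it into two faces, one on each side of `e_uv`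
(the faces traced from the two darts of `e_uv`), containing `a` resp. `b` of the degree-1
vertices of `H`. -/
noncomputable def InnerAug.sides {G : Multigraph} {u v : G.V} {emb : PlanarEmbedding G}
    {outer : emb.toRotSystem.Face} (A : InnerAug G u v emb outer) (huv : u ≠ v)
    (a b : ℕ) : Prop :=
  let hne : A.ι.vmap u ≠ A.ι.vmap v := fun hh => huv (A.ι.vmap.injective hh)
  let Hp := addEdge A.H (A.ι.vmap u) (A.ι.vmap v) hne
  let ιp := addEdgeSub A.H (A.ι.vmap u) (A.ι.vmap v) hne
  let dU := addEdgeDartL A.H (A.ι.vmap u) (A.ι.vmap v) hne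
  let dV := addEdgeDartR A.H (A.ι.vmap u) (A.ι.vmap v) hne
  ∃ embP : PlanarEmbedding Hp,
    RestrictsTo ιp embP.toRotSystem A.embH.toRotSystem ∧
    -- the new edge is inserted into the outer face: the outer face splits into the
    -- two faces on the two sides of the new edge
    (∀ d : A.H.Dart,
      (Sum.inl (A.embH.toRotSystem.faceOf d) : A.embH.toRotSystem.Face) = A.outerH →
        embP.toRotSystem.faceOf (ιp.dmap d) = embP.toRotSystem.faceOf dU ∨
        embP.toRotSystem.faceOf (ιp.dmap d) = embP.toRotSystem.faceOf dV) ∧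
    a = Nat.card {w : A.H.V // A.H.degree w = 1 ∧
          ∃ dp : Hp.Dart, dp.1.2 = w ∧
            embP.toRotSystem.faceOf dp = embP.toRotSystem.faceOf dU} ∧
    b = Nat.card {w : A.H.V // A.H.degree w = 1 ∧
          ∃ dp : Hp.Dart, dp.1.2 = w ∧
            embP.toRotSystem.faceOf dp = embP.toRotSystem.faceOf dV}

/-- `(G, u, v)` with embedding `emb` and outer face `outer` admits an inner augmentation
with `d(H, 𝓔_H) = (a, b)`. -/
noncomputable def realizes (G : Multigraph) (u v : G.V) (emb : PlanarEmbedding G)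
    (outer : emb.toRotSystem.Face) (a b : ℕ) : Prop :=
  ∃ (huv : u ≠ v) (A : InnerAug G u v emb outer), A.sides huv a b

/-- The embedded label set `LSemb(G_uv, 𝓔_uv)`. -/
noncomputable def LSemb (G : Multigraph) (u v : G.V) (emb : PlanarEmbedding G)
    (outer : emb.toRotSystem.Face) : Set (ℕ × ℕ) :=
  {p | p.1 ≤ 1 ∧ p.2 ≤ 1 ∧ realizes G u v emb outer p.1 p.2}

/-- The variable label set `LSvar(G_uv)`: the union of the embedded label sets over all
planar embeddings of `G` having `u` and `v` on the outer face. -/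
noncomputable def LSvar (G : Multigraph) (u v : G.V) : Set (ℕ × ℕ) :=
  {p | ∃ (emb : PlanarEmbedding G) (outer : emb.toRotSystem.Face),
    emb.toRotSystem.FaceInc outer u ∧ emb.toRotSystem.FaceInc outer v ∧
    p ∈ LSemb G u v emb outer}

/-- The dart of `P` corresponding to a dart of `G` at a core vertex. -/
noncomputable def coreDart {G P : Multigraph} {u v : G.V} (em : G.E ↪ P.E)
    (vm : {x : G.V // x ≠ u ∧ x ≠ v} ↪ P.V)
    (hc : ∀ (e : G.E) (x : G.V), x ∈ G.ends e → ∀ (hxu : x ≠ u) (hxv : x ≠ v),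
        vm ⟨x, hxu, hxv⟩ ∈ P.ends (em e))
    (d : G.Dart) (hdu : d.1.2 ≠ u) (hdv : d.1.2 ≠ v) : P.Dart :=
  ⟨(em d.1.1, vm ⟨d.1.2, hdu, hdv⟩), hc d.1.1 d.1.2 d.2 hdu hdv⟩

/-- The planar embedding `embP` of `P` agrees with the given embedding `emb` of `G` on
the common core (`G` minus the special vertices `u, v`): there are endpoint-compatible
injections of the edges of `G` and of the vertices of `G` other than `u, v` into `P`
such that the rotation of `emb` at the surviving darts is the first-return map of the
rotation of `embP`. -/
noncomputable def CoreExtends (G : Multigraph) (u v : G.V) (emb : PlanarEmbedding G)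
    (P : Multigraph) (embP : PlanarEmbedding P) : Prop :=
  ∃ (em : G.E ↪ P.E) (vm : {x : G.V // x ≠ u ∧ x ≠ v} ↪ P.V),
    ∃ hc : (∀ (e : G.E) (x : G.V), x ∈ G.ends e → ∀ (hxu : x ≠ u) (hxv : x ≠ v),
        vm ⟨x, hxu, hxv⟩ ∈ P.ends (em e)),
    ∀ (d : G.Dart) (hdu : d.1.2 ≠ u) (hdv : d.1.2 ≠ v),
      ∃ n : ℕ, 0 < n ∧
        (⇑embP.toRotSystem.rot)^[n] (coreDart em vm hc d hdu hdv) =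
          coreDart em vm hc (emb.toRotSystem.rot d)
            (by rw [emb.toRotSystem.vx_eq]; exact hdu)
            (by rw [emb.toRotSystem.vx_eq]; exact hdv) ∧
        ∀ m : ℕ, 0 < m → m < n →
          ∀ (d' : G.Dart) (h1 : d'.1.2 ≠ u) (h2 : d'.1.2 ≠ v),
            (⇑embP.toRotSystem.rot)^[m] (coreDart em vm hc d hdu hdv) ≠
              coreDart em vm hc d' h1 h2

/-- `(P, u, v)` (with the inclusion `ι`) is a pertinent-like subgraph of `G`: a connected
subcubic subgraph meeting the rest of `G` only in the two poles `u, v`, which have degree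
at most `2` inside `P`.  The pertinent graphs `pert(μ)` of the vertices `μ` of the
SPQR-tree of `G` (rooted at a Q-vertex) are exactly of this form. -/
noncomputable def IsPertinent (G P : Multigraph) (u v : P.V) (ι : P.SubgraphOf G) : Prop :=
  P.Connected ∧ u ≠ v ∧ P.degree u ≤ 2 ∧ P.degree v ≤ 2 ∧
    (∃ e : G.E, e ∉ Set.range ι.emap) ∧
    ∀ e : G.E, e ∉ Set.range ι.emap →
      ∀ x : P.V, ι.vmap x ∈ G.ends e → x = u ∨ x = v
/-! ## The Generalized Factor instance of Lemma 3.2 -/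

namespace Multigraph

namespace RotSystem

variable {G : Multigraph} (R : RotSystem G)

/-- The blocks of the face graph `G_f`. -/
noncomputable def FaceBlocks (f : R.Face) : Type :=
  {S : Set (R.faceGraph f).E // IsBlockSet (R.faceGraph f) S}

/-- The vertex set of the Generalized Factor instance `A`:
the degree-2 vertices `𝒱` of `G`, together with `ℱ` = (normal faces) ⊎ (blocks of the
face graphs of connecting faces). -/
noncomputable def GFVert : Type :=
  {v : G.V // G.degree v = 2} ⊕
    ({f : R.Face // ¬ R.ConnectingFace f} ⊕
      (Σ f : {f : R.Face // R.ConnectingFace f}, R.FaceBlocks f.1))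

/-- One-sided adjacency of the instance `A`: a degree-2 vertex is adjacent to a normal
face it is incident to, and to a block containing it. -/
noncomputable def GFAdjL : R.GFVert → R.GFVert → Prop := fun x y =>
  match x, y with
  | .inl vv, .inr (.inl ff) => R.FaceInc ff.1 vv.1
  | .inl vv, .inr (.inr fS) => ∃ e, e ∈ fS.2.1 ∧ vv.1 ∈ G.ends e.1
  | _, _ => False

/-- The bipartite graph `A` of the Generalized Factor instance. -/
noncomputable def GFGraph : SimpleGraph R.GFVert where
  Adj x y := R.GFAdjL x y ∨ R.GFAdjL y x
  symm := ⟨fun _ _ h => h.symm⟩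
  loopless := ⟨by
    rintro (vv | (ff | fS)) (h | h) <;> exact h⟩

/-- The degree of a vertex in a graph on the vertex set of `A`. -/
noncomputable def degA (A' : SimpleGraph R.GFVert) (x : R.GFVert) : ℕ :=
  Nat.card {y : R.GFVert // A'.Adj x y}

/-- The prescribed degree sets `B(x)` of the Generalized Factor instance. -/
noncomputable def Bset : R.GFVert → Set ℕ := fun x =>
  match x with
  | .inl vv => {1}
  | .inr (.inl ff) => insert 0 (Set.Icc 2 (R.degA R.GFGraph (.inr (.inl ff))))
  | .inr (.inr fS) =>
      if nCutInBlock (R.faceGraph fS.1.1) fS.2.1 = 0 then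
        -- singleton block
        Set.Icc 2 (R.degA R.GFGraph (.inr (.inr fS)))
      else if nCutInBlock (R.faceGraph fS.1.1) fS.2.1 = 1 then
        -- leaf block
        Set.Icc 1 (R.degA R.GFGraph (.inr (.inr fS)))
      else
        -- inner block
        Set.Iic (R.degA R.GFGraph (.inr (.inr fS)))

/-- The instance `A` admits a `B`-factor: a spanning subgraph with all degrees in the
prescribed sets. -/
noncomputable def HasBFactor : Prop :=
  ∃ A' : SimpleGraph R.GFVert, A' ≤ R.GFGraph ∧ ∀ x : R.GFVert, R.degA A' x ∈ R.Bset x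

end RotSystem

end Multigraph

open Multigraph

/-! ### Auxiliary lemmas for STATEMENT 15 -/

section Aux15

lemma aux15_three_distinct {α : Type*} [Finite α] {F : Set α} (h : Nat.card F ≤ 2)
    {a b c : α} (ha : a ∈ F) (hb : b ∈ F) (hc : c ∈ F)
    (hab : a ≠ b) (hac : a ≠ c) (hbc : b ≠ c) : False := by
  have h3 : ({a, b, c} : Set α).ncard = 3 := by
    rw [Set.ncard_insert_of_notMem (by simp [hab, hac]),
      Set.ncard_insert_of_notMem (by simp [hbc]), Set.ncard_singleton]
  have hsub : ({a, b, c} : Set α) ⊆ F := by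
    intro x hx
    rcases hx with rfl | rfl | rfl <;> assumption
  have := Set.ncard_le_ncard hsub (Set.toFinite F)
  rw [h3] at this
  rw [Nat.card_coe_set_eq] at h
  omega

open Fin.NatCast in
lemma aux15_chain_except {V : Type*} {Gr : SimpleGraph V} {n : ℕ} [NeZero n] (hn : 3 ≤ n)
    (f : Fin n → V)
    (i0 : Fin n) (h : ∀ i : Fin n, i ≠ i0 → Gr.Reachable (f i) (f (i + 1))) :
    ∀ i j : Fin n, Gr.Reachable (f i) (f j) := by
  have key : ∀ t : ℕ, t ≤ n - 1 → Gr.Reachable (f (i0 + 1)) (f (i0 + 1 + (t : Fin n))) := by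
    intro t
    induction t with
    | zero => intro _; simpa using SimpleGraph.Reachable.refl _
    | succ t ih =>
      intro ht
      have h1 := ih (by omega)
      have hne : i0 + 1 + (t : Fin n) ≠ i0 := by
        intro he
        have h2 : i0 + ((1 : Fin n) + (t : Fin n)) = i0 + 0 := by
          rw [← add_assoc, he, add_zero]
        have h3 := add_left_cancel h2
        have h4 : (((1 + t : ℕ) : Fin n)) = 0 := by push_cast; exact h3
        have h5 := congrArg Fin.val h4
        rw [Fin.val_natCast] at h5
        rw [Nat.mod_eq_of_lt (by omega)] at h5
        simp at h5
      have hstep := h _ hne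
      have heq : i0 + 1 + ((t + 1 : ℕ) : Fin n) = i0 + 1 + (t : Fin n) + 1 := by
        push_cast
        simp only [add_assoc]
      rw [heq]
      exact h1.trans hstep
  have key2 : ∀ j : Fin n, Gr.Reachable (f (i0 + 1)) (f j) := by
    intro j
    have h1 := key (j - (i0 + 1)).val (by have := (j - (i0 + 1)).isLt; omega)
    rwa [Fin.cast_val_eq_self, add_comm (i0 + 1), sub_add_cancel] at h1
  intro i j
  exact (key2 i).symm.trans (key2 j)

namespace Multigraph

lemma aux15_deleteEdges_le (G : Multigraph) (F : Set G.E) :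
    (G.deleteEdges F).toSimpleGraph ≤ G.toSimpleGraph := by
  rintro x y (⟨hxy, e, he⟩ : _ ≠ _ ∧ _)
  exact ⟨hxy, e.1, he⟩

lemma aux15_connected_of_deleteEdges {G : Multigraph} {F : Set G.E}
    (h : (G.deleteEdges F).Connected) : G.Connected :=
  h.mono (aux15_deleteEdges_le G F)

/-- The simple-graph isomorphism induced by a multigraph isomorphism. -/
noncomputable def Iso.toSG {G H : Multigraph} (e : G.Iso H) :
    G.toSimpleGraph ≃g H.toSimpleGraph where
  toEquiv := e.veq
  map_rel_iff' := by
    intro x y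
    constructor
    · rintro (⟨hne, f, hf⟩ : _ ≠ _ ∧ _)
      refine ⟨fun hh => hne (by rw [hh]), e.eeq.symm f, ?_⟩
      have h1 := e.ends_eq (e.eeq.symm f)
      rw [Equiv.apply_symm_apply] at h1
      have h2 : (G.ends (e.eeq.symm f)).map e.veq = (s(x, y) : Sym2 G.V).map e.veq := by
        rw [← h1, hf, Sym2.map_pair_eq]
      exact Sym2.map.injective e.veq.injective h2
    · rintro (⟨hne, f, hf⟩ : _ ≠ _ ∧ _)
      refine ⟨fun hh => hne (e.veq.injective hh), e.eeq f, ?_⟩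
      rw [e.ends_eq, hf, Sym2.map_pair_eq]

lemma aux15_connected_of_iso {G H : Multigraph} (e : G.Iso H) (h : H.Connected) :
    G.Connected := by
  haveI : Nonempty G.V := ⟨e.veq.symm (Classical.choice h.nonempty)⟩
  refine ⟨fun x y => ?_⟩
  have hr := h.preconnected (e.veq x) (e.veq y)
  have := hr.map (Iso.toSG e).symm.toHom
  simpa [Iso.toSG] using this

lemma aux15_EdgeConnGE_mono {G : Multigraph} {j k : ℕ} (hjk : j ≤ k)
    (h : G.EdgeConnGE k) : G.EdgeConnGE j :=
  ⟨h.1, fun F hF => h.2 F (lt_of_lt_of_le hF hjk)⟩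

lemma aux15_EdgeConnGE_of_iso {G H : Multigraph} (e : G.Iso H) {k : ℕ}
    (h : H.EdgeConnGE k) : G.EdgeConnGE k := by
  refine ⟨aux15_connected_of_iso e h.1, ?_⟩
  intro F hF
  have hcard : Nat.card ↑(e.eeq '' F) < k := by
    rwa [Nat.card_coe_set_eq, Set.ncard_image_of_injective F e.eeq.injective,
      ← Nat.card_coe_set_eq]
  have hH := h.2 (e.eeq '' F) hcard
  refine aux15_connected_of_iso ?_ hH
  exact
    { veq := e.veq
      eeq := e.eeq.subtypeEquiv (fun a =>
        not_congr e.eeq.injective.mem_set_image.symm)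
      ends_eq := fun f => e.ends_eq f.1 }

end Multigraph

end Aux15

lemma aux15_gadget {V : Type*} {Gr : SimpleGraph V} {n : ℕ} [NeZero n] (hn : 3 ≤ n)
    (S A B : Fin n → V) (E : Fin n → Fin 4 → Prop)
    (hA0 : ∀ i, E i 0 → Gr.Reachable (S i) (A i))
    (hA1 : ∀ i, E i 1 → Gr.Reachable (S i) (A (i + 1)))
    (hB : ∀ i, E i 2 → Gr.Reachable (B i) (B (i + 1)))
    (hSp : ∀ i, E i 3 → Gr.Reachable (A i) (B i))
    (h3 : ∀ (i1 : Fin n) (t1 : Fin 4) (i2 : Fin n) (t2 : Fin 4) (i3 : Fin n) (t3 : Fin 4),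
      ¬ E i1 t1 → ¬ E i2 t2 → ¬ E i3 t3 →
      (i1, t1) ≠ (i2, t2) → (i1, t1) ≠ (i3, t3) → (i2, t2) ≠ (i3, t3) → False) :
    (∀ i j, Gr.Reachable (A i) (A j)) ∧ (∀ i, Gr.Reachable (B i) (A 0)) ∧
      (∀ i, (E i 0 ∨ E i 1) → Gr.Reachable (S i) (A 0)) := by
  -- Fin arithmetic facts
  have hv1 : (1 : Fin n).val = 1 := by
    rw [Fin.val_one', Nat.mod_eq_of_lt (by omega)]
  have h1ne : (1 : Fin n) ≠ 0 := by
    intro h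
    have h' := congrArg Fin.val h
    rw [hv1] at h'
    simp at h'
  have h2ne : (1 : Fin n) + 1 ≠ 0 := by
    intro h
    have h' := congrArg Fin.val h
    rw [Fin.val_add, hv1, Nat.mod_eq_of_lt (by omega)] at h'
    simp at h'
  have hadd : ∀ (i c : Fin n), c ≠ 0 → i + c ≠ i := by
    intro i c hc h
    apply hc
    have : i + c = i + 0 := by rw [add_zero]; exact h
    exact add_left_cancel this
  have hne1 : ∀ i : Fin n, i + 1 ≠ i := fun i => hadd i 1 h1ne
  have hne2 : ∀ i : Fin n, i + 1 + 1 ≠ i := by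
    intro i
    rw [add_assoc]
    exact hadd i (1 + 1) h2ne
  have hnesub : ∀ i : Fin n, i - 1 ≠ i := by
    intro i h
    have h2 := sub_add_cancel i 1
    rw [h] at h2
    exact hne1 i h2
  by_cases hs : ∀ i, E i 3
  · -- all spokes intact
    obtain ⟨i0, hlink⟩ : ∃ i0, ∀ i, i ≠ i0 → (E i 0 ∧ E i 1) ∨ E i 2 := by
      by_contra hno
      push_neg at hno
      obtain ⟨i1, -, hb1⟩ := hno 0
      obtain ⟨i2, h21, hb2⟩ := hno i1
      obtain ⟨t1, ht1, hE1⟩ : ∃ t1 : Fin 4, t1 ≠ 2 ∧ ¬ E i1 t1 := by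
        by_cases h0 : E i1 0
        · exact ⟨1, by decide, hb1.1 h0⟩
        · exact ⟨0, by decide, h0⟩
      exact h3 i1 t1 i1 2 i2 2 hE1 hb1.2 hb2.2
        (fun h => ht1 (congrArg Prod.snd h))
        (fun h => h21.symm (congrArg Prod.fst h))
        (fun h => h21.symm (congrArg Prod.fst h))
    have hchain : ∀ i, i ≠ i0 → Gr.Reachable (A i) (A (i + 1)) := by
      intro i hi
      rcases hlink i hi with ⟨h0, h1⟩ | h2
      · exact (hA0 i h0).symm.trans (hA1 i h1)
      · exact (hSp i (hs i)).trans ((hB i h2).trans (hSp (i + 1) (hs (i + 1))).symm)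
    have reachA := aux15_chain_except hn A i0 hchain
    refine ⟨reachA, fun i => (hSp i (hs i)).symm.trans (reachA i 0), fun i hi => ?_⟩
    rcases hi with h0 | h1
    · exact (hA0 i h0).trans (reachA i 0)
    · exact (hA1 i h1).trans (reachA (i + 1) 0)
  · -- some spoke deleted
    push_neg at hs
    obtain ⟨is, his⟩ := hs
    obtain ⟨i0, hgap⟩ : ∃ i0, ∀ i, i ≠ i0 → E i 0 ∧ E i 1 := by
      by_contra hno
      push_neg at hno
      obtain ⟨i1, -, hb1⟩ := hno 0
      obtain ⟨i2, h21, hb2⟩ := hno i1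
      obtain ⟨t1, ht1, hE1⟩ : ∃ t1 : Fin 4, t1 ≠ 3 ∧ ¬ E i1 t1 := by
        by_cases h0 : E i1 0
        · exact ⟨1, by decide, hb1 h0⟩
        · exact ⟨0, by decide, h0⟩
      obtain ⟨t2, ht2, hE2⟩ : ∃ t2 : Fin 4, t2 ≠ 3 ∧ ¬ E i2 t2 := by
        by_cases h0 : E i2 0
        · exact ⟨1, by decide, hb2 h0⟩
        · exact ⟨0, by decide, h0⟩
      exact h3 i1 t1 i2 t2 is 3 hE1 hE2 his
        (fun h => h21.symm (congrArg Prod.fst h))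
        (fun h => ht1 (congrArg Prod.snd h))
        (fun h => ht2 (congrArg Prod.snd h))
    have reachA : ∀ i j, Gr.Reachable (A i) (A j) :=
      aux15_chain_except hn A i0
        (fun i hi => (hA0 i (hgap i hi).1).symm.trans (hA1 i (hgap i hi).2))
    have reachB : ∀ i, Gr.Reachable (B i) (A 0) := by
      intro i
      by_cases h3i : E i 3
      · exact (hSp i h3i).symm.trans (reachA i 0)
      · by_cases h2i : E i 2
        · have r1 := hB i h2i
          by_cases h3i1 : E (i + 1) 3
          · exact r1.trans ((hSp (i + 1) h3i1).symm.trans (reachA (i + 1) 0))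
          · have h2i1 : E (i + 1) 2 := by
              by_contra hb
              exact h3 i 3 (i + 1) 3 (i + 1) 2 h3i h3i1 hb
                (fun h => hne1 i (congrArg Prod.fst h).symm)
                (fun h => hne1 i (congrArg Prod.fst h).symm)
                (fun h => (by decide : (3 : Fin 4) ≠ 2) (congrArg Prod.snd h))
            have h3i2 : E (i + 1 + 1) 3 := by
              by_contra hb
              exact h3 i 3 (i + 1) 3 (i + 1 + 1) 3 h3i h3i1 hb
                (fun h => hne1 i (congrArg Prod.fst h).symm)
                (fun h => hne2 i (congrArg Prod.fst h).symm)
                (fun h => hne1 (i + 1) (congrArg Prod.fst h).symm)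
            exact r1.trans ((hB (i + 1) h2i1).trans
              ((hSp (i + 1 + 1) h3i2).symm.trans (reachA (i + 1 + 1) 0)))
        · have h2p : E (i - 1) 2 := by
            by_contra hb
            exact h3 i 3 i 2 (i - 1) 2 h3i h2i hb
              (fun h => (by decide : (3 : Fin 4) ≠ 2) (congrArg Prod.snd h))
              (fun h => hnesub i (congrArg Prod.fst h).symm)
              (fun h => hnesub i (congrArg Prod.fst h).symm)
          have h3p : E (i - 1) 3 := by
            by_contra hb
            exact h3 i 3 i 2 (i - 1) 3 h3i h2i hb
              (fun h => (by decide : (3 : Fin 4) ≠ 2) (congrArg Prod.snd h))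
              (fun h => hnesub i (congrArg Prod.fst h).symm)
              (fun h => hnesub i (congrArg Prod.fst h).symm)
          have r1 := hB (i - 1) h2p
          rw [sub_add_cancel] at r1
          exact r1.symm.trans ((hSp (i - 1) h3p).symm.trans (reachA (i - 1) 0))
    refine ⟨reachA, reachB, fun i hi => ?_⟩
    rcases hi with h0 | h1
    · exact (hA0 i h0).trans (reachA i 0)
    · exact (hA1 i h1).trans (reachA (i + 1) 0)

namespace Multigraph

lemma aux15_pmap_eq {α β : Type*} {P : α → Prop} (f : ∀ a, P a → β) (z : Sym2 α)
    (hz : ∀ a ∈ z, P a) (a b : α) (h : z = s(a, b)) (ha : P a) (hb : P b) :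
    z.pmap f hz = s(f a ha, f b hb) := by
  subst h
  rw [Sym2.pmap_pair]

lemma aux15_ends_pos (G : Multigraph) (v : G.V) (m : ℕ)
    (φ : {e : G.E // v ∈ G.ends e} ≃ Fin (m + 3)) (e : G.E) (h : v ∈ G.ends e) :
    (wheelExtension G v m φ).ends (Sum.inl e) =
      s(Sum.inl ⟨Sym2.Mem.other h, Sym2.other_ne (G.loopless e) h⟩,
        Sum.inr (Sum.inl (φ ⟨e, h⟩))) := by
  simp only [wheelExtension, replaceVertex]
  rw [dif_pos h]
  rfl

lemma aux15_ends_neg (G : Multigraph) (v : G.V) (m : ℕ)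
    (φ : {e : G.E // v ∈ G.ends e} ≃ Fin (m + 3)) (e : G.E) {x y : G.V}
    (hends : G.ends e = s(x, y)) (hx : x ≠ v) (hy : y ≠ v) :
    (wheelExtension G v m φ).ends (Sum.inl e) =
      s(Sum.inl ⟨x, hx⟩, Sum.inl ⟨y, hy⟩) := by
  have hvne : v ∉ G.ends e := by
    rw [hends]
    intro hmem
    rcases Sym2.mem_iff.mp hmem with h1 | h1
    · exact hx h1.symm
    · exact hy h1.symm
  simp only [wheelExtension, replaceVertex]
  rw [dif_neg hvne]
  have hxm : x ∈ G.ends e := by rw [hends]; exact Sym2.mem_mk_left _ _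
  have hym : y ∈ G.ends e := by rw [hends]; exact Sym2.mem_mk_right _ _
  exact aux15_pmap_eq _ _ _ x y hends hxm hym

lemma aux15_ends_gadget (G : Multigraph) (v : G.V) (m : ℕ)
    (φ : {e : G.E // v ∈ G.ends e} ≃ Fin (m + 3)) (w : Fin (m + 3) × Fin 4) :
    (wheelExtension G v m φ).ends (Sum.inr w) = ((wheelGadget m).ends w).map Sum.inr :=
  rfl

lemma aux15_wheelExt_del_conn (G : Multigraph) (v : G.V)
    (m : ℕ) (φ : {e : G.E // v ∈ G.ends e} ≃ Fin (m + 3)) (k : ℕ)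
    (hk1 : 1 ≤ k) (hk3 : k ≤ 3) (hG : G.EdgeConnGE k)
    (F : Set (wheelExtension G v m φ).E) (hF : Nat.card F < k) :
    ((wheelExtension G v m φ).deleteEdges F).Connected := by
  classical
  haveI : NeZero (m + 3) := ⟨by omega⟩
  have hF2 : Nat.card F ≤ 2 := by omega
  have hF3 : ∀ a b c : (wheelExtension G v m φ).E, a ∈ F → b ∈ F → c ∈ F →
      a ≠ b → a ≠ c → b ≠ c → False := fun _ _ _ ha hb hc hab hac hbc =>
    aux15_three_distinct hF2 ha hb hc hab hac hbc
  have adjD : ∀ (e : (wheelExtension G v m φ).E), e ∉ F →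
      ∀ x y : (wheelExtension G v m φ).V, (wheelExtension G v m φ).ends e = s(x, y) →
      x ≠ y →
      ((wheelExtension G v m φ).deleteEdges F).toSimpleGraph.Adj x y :=
    fun e he x y hxy hne => (⟨hne, ⟨e, he⟩, hxy⟩ : _ ≠ _ ∧ _)
  -- Fin facts
  have hv1 : (1 : Fin (m + 3)).val = 1 := by
    rw [Fin.val_one', Nat.mod_eq_of_lt (by omega)]
  have hne1 : ∀ i : Fin (m + 3), i + 1 ≠ i := by
    intro i h
    have h2 : i + 1 = i + 0 := by rw [add_zero]; exact h
    have h3 := add_left_cancel h2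
    have h4 := congrArg Fin.val h3
    rw [hv1] at h4
    simp at h4
  -- gadget reachability
  obtain ⟨reachA, reachB, reachS⟩ :=
    aux15_gadget (Gr := ((wheelExtension G v m φ).deleteEdges F).toSimpleGraph)
      (by omega : 3 ≤ m + 3)
      (fun i => Sum.inr (Sum.inl i))
      (fun i => Sum.inr (Sum.inr (i, 0)))
      (fun i => Sum.inr (Sum.inr (i, 1)))
      (fun i t => (Sum.inr (i, t) : (wheelExtension G v m φ).E) ∉ F)
      (fun i hi => (adjD _ hi _ _ (by
        rw [aux15_ends_gadget, show (wheelGadget m).ends (i, 0) =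
          s(Sum.inl i, Sum.inr (i, 0)) from by simp [wheelGadget]]
        rfl) (fun h => Sum.inl_ne_inr (Sum.inr_injective h))).reachable)
      (fun i hi => (adjD _ hi _ _ (by
        rw [aux15_ends_gadget, show (wheelGadget m).ends (i, 1) =
          s(Sum.inl i, Sum.inr (i + 1, 0)) from by simp [wheelGadget]]
        rfl) (fun h => Sum.inl_ne_inr (Sum.inr_injective h))).reachable)
      (fun i hi => (adjD _ hi _ _ (by
        rw [aux15_ends_gadget, show (wheelGadget m).ends (i, 2) =
          s(Sum.inr (i, 1), Sum.inr (i + 1, 1)) from by simp [wheelGadget]]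
        rfl) (fun h => hne1 i
          (congrArg Prod.fst (Sum.inr_injective (Sum.inr_injective h))).symm)).reachable)
      (fun i hi => (adjD _ hi _ _ (by
        rw [aux15_ends_gadget, show (wheelGadget m).ends (i, 3) =
          s(Sum.inr (i, 0), Sum.inr (i, 1)) from by simp [wheelGadget]]
        rfl) (fun h => (by decide : (0 : Fin 2) ≠ 1)
          (congrArg Prod.snd (Sum.inr_injective (Sum.inr_injective h))))).reachable)
      (by
        intro i1 t1 i2 t2 i3 t3 h1 h2 h3' hp1 hp2 hp3
        rw [not_not] at h1 h2 h3'
        exact hF3 _ _ _ h1 h2 h3'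
          (fun h => hp1 (Sum.inr_injective h))
          (fun h => hp2 (Sum.inr_injective h))
          (fun h => hp3 (Sum.inr_injective h)))
  -- the bad set of G-edges
  set Bad : Set G.E := {e | (Sum.inl e : (wheelExtension G v m φ).E) ∈ F ∨
      ∃ h : v ∈ G.ends e,
        ((Sum.inr (φ ⟨e, h⟩, 0) : (wheelExtension G v m φ).E) ∈ F ∧
         (Sum.inr (φ ⟨e, h⟩, 1) : (wheelExtension G v m φ).E) ∈ F)} with hBadDef
  have hBadCard : Nat.card ↑Bad < k := by
    refine lt_of_le_of_lt (Nat.card_le_card_of_injective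
      (fun e => if he : (Sum.inl e.1 : (wheelExtension G v m φ).E) ∈ F then
          (⟨Sum.inl e.1, he⟩ : ↑F)
        else
          ⟨Sum.inr (φ ⟨e.1, (e.2.resolve_left he).choose⟩, 0),
            (e.2.resolve_left he).choose_spec.1⟩) ?_) hF
    intro a b hab
    by_cases ha : (Sum.inl a.1 : (wheelExtension G v m φ).E) ∈ F <;>
      by_cases hb : (Sum.inl b.1 : (wheelExtension G v m φ).E) ∈ F <;>
      simp only [ha, hb, dif_pos, dif_neg, not_false_iff] at hab <;>
      have hab' := congrArg Subtype.val hab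
    · exact Subtype.ext (Sum.inl_injective hab')
    · exact absurd hab' (by simp)
    · exact absurd hab' (by simp)
    · have hab2 := congrArg Prod.fst (Sum.inr_injective hab')
      have h5 := φ.injective hab2
      exact Subtype.ext (congrArg (Subtype.val : {e : G.E // v ∈ G.ends e} → G.E) h5)
  have hGBad := hG.2 Bad hBadCard
  -- transfer along old-vertex walks
  have hT : ∀ x : G.V, ∀ hx : x ≠ v,
      ((wheelExtension G v m φ).deleteEdges F).toSimpleGraph.Reachable
        (Sum.inl ⟨x, hx⟩) (Sum.inr (Sum.inr (0, 0))) := by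
    have step : ∀ x y : G.V, (G.deleteEdges Bad).toSimpleGraph.Adj x y →
        (∀ hy : y ≠ v,
          ((wheelExtension G v m φ).deleteEdges F).toSimpleGraph.Reachable
            (Sum.inl ⟨y, hy⟩) (Sum.inr (Sum.inr (0, 0)))) →
        (∀ hx : x ≠ v,
          ((wheelExtension G v m φ).deleteEdges F).toSimpleGraph.Reachable
            (Sum.inl ⟨x, hx⟩) (Sum.inr (Sum.inr (0, 0)))) := by
      rintro x y (⟨hxy, ⟨e, heBad⟩, hends0⟩ : _ ≠ _ ∧ _) hPy hx
      have hends : G.ends e = s(x, y) := hends0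
      have heF : (Sum.inl e : (wheelExtension G v m φ).E) ∉ F :=
        fun hmem => heBad (Or.inl hmem)
      by_cases hyv : y = v
      · rw [hyv] at hends
        have h : v ∈ G.ends e := by rw [hends]; exact Sym2.mem_mk_right _ _
        have hoth : Sym2.Mem.other h = x := by
          have ho := (Sym2.other_spec h).trans hends
          rcases Sym2.eq_iff.mp ho with ⟨h1, _⟩ | ⟨_, h2⟩
          · exact absurd h1.symm hx
          · exact h2
        have hends' : (wheelExtension G v m φ).ends (Sum.inl e) =
            s(Sum.inl ⟨x, hx⟩, Sum.inr (Sum.inl (φ ⟨e, h⟩))) := by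
          rw [aux15_ends_pos G v m φ e h,
            show (⟨Sym2.Mem.other h, Sym2.other_ne (G.loopless e) h⟩ : {z : G.V // z ≠ v}) =
              ⟨x, hx⟩ from Subtype.ext hoth]
        have hadj := adjD _ heF _ _ hends' (fun hh => Sum.inl_ne_inr hh)
        have hnb : (Sum.inr (φ ⟨e, h⟩, 0) : (wheelExtension G v m φ).E) ∉ F ∨
            (Sum.inr (φ ⟨e, h⟩, 1) : (wheelExtension G v m φ).E) ∉ F := by
          by_contra hboth
          push_neg at hboth
          exact heBad (Or.inr ⟨h, hboth.1, hboth.2⟩)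
        exact hadj.reachable.trans (reachS (φ ⟨e, h⟩) hnb)
      · have hadj := adjD _ heF (Sum.inl ⟨x, hx⟩) (Sum.inl ⟨y, hyv⟩)
          (aux15_ends_neg G v m φ e hends hx hyv)
          (fun hh => hxy (congrArg Subtype.val (Sum.inl_injective hh)))
        exact hadj.reachable.trans (hPy hyv)
    have walkind : ∀ x y : G.V, (G.deleteEdges Bad).toSimpleGraph.Walk x y →
        (∀ hy : y ≠ v,
          ((wheelExtension G v m φ).deleteEdges F).toSimpleGraph.Reachable
            (Sum.inl ⟨y, hy⟩) (Sum.inr (Sum.inr (0, 0)))) →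
        (∀ hx : x ≠ v,
          ((wheelExtension G v m φ).deleteEdges F).toSimpleGraph.Reachable
            (Sum.inl ⟨x, hx⟩) (Sum.inr (Sum.inr (0, 0)))) := by
      intro x y w
      induction w with
      | nil => exact fun h => h
      | cons hadj _ ih => exact fun hy => step _ _ hadj (ih hy)
    intro x hx
    obtain ⟨w⟩ := hGBad.preconnected x v
    exact walkind x v w (fun hv' => absurd rfl hv') hx
  -- full reachability for subdivision vertices
  have reachS' : ∀ i : Fin (m + 3),
      ((wheelExtension G v m φ).deleteEdges F).toSimpleGraph.Reachable
        (Sum.inr (Sum.inl i)) (Sum.inr (Sum.inr (0, 0))) := by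
    intro i
    by_cases hnb : (Sum.inr (i, 0) : (wheelExtension G v m φ).E) ∉ F ∨
        (Sum.inr (i, 1) : (wheelExtension G v m φ).E) ∉ F
    · exact reachS i hnb
    · push_neg at hnb
      obtain ⟨h0, h1⟩ := hnb
      set e' := φ.symm i with he'
      have hφ : φ ⟨e'.1, e'.2⟩ = i := by
        rw [show (⟨e'.1, e'.2⟩ : {e : G.E // v ∈ G.ends e}) = e' from rfl, he',
          Equiv.apply_symm_apply]
      have heF : (Sum.inl e'.1 : (wheelExtension G v m φ).E) ∉ F := by
        intro hmem
        exact hF3 _ _ _ hmem h0 h1 (fun hh => Sum.inl_ne_inr hh)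
          (fun hh => Sum.inl_ne_inr hh)
          (fun hh => (by decide : (0 : Fin 4) ≠ 1)
            (congrArg Prod.snd (Sum.inr_injective hh)))
      have hx : Sym2.Mem.other e'.2 ≠ v := Sym2.other_ne (G.loopless e'.1) e'.2
      have hadj := adjD _ heF (Sum.inl ⟨Sym2.Mem.other e'.2, hx⟩)
        (Sum.inr (Sum.inl i))
        (by rw [aux15_ends_pos G v m φ e'.1 e'.2, hφ]; rfl) (fun hh => Sum.inl_ne_inr hh)
      exact hadj.reachable.symm.trans (hT _ hx)
  -- assemble
  have reachAll : ∀ z : ((wheelExtension G v m φ).deleteEdges F).V,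
      ((wheelExtension G v m φ).deleteEdges F).toSimpleGraph.Reachable
        z (Sum.inr (Sum.inr (0, 0))) := by
    rintro (⟨x, hx⟩ | (i | ⟨i, b⟩))
    · exact hT x hx
    · exact reachS' i
    · obtain ⟨bv, hb⟩ := b
      interval_cases bv
      · exact reachA i 0
      · exact reachB i
  haveI : Nonempty ((wheelExtension G v m φ).deleteEdges F).V :=
    ⟨Sum.inr (Sum.inr (0, 0))⟩
  exact ⟨fun x y => (reachAll x).trans (reachAll y).symm⟩

end Multigraph


namespace Multigraph

lemma aux15_no_edges_reachable {H : Multigraph} {x y : H.V}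
    (h : (H.deleteEdges Set.univ).toSimpleGraph.Reachable x y) : x = y := by
  obtain ⟨w⟩ := h
  induction w with
  | nil => rfl
  | cons hadj _ ih =>
    obtain ⟨-, e, -⟩ : _ ≠ _ ∧ _ := hadj
    exact absurd (Set.mem_univ e.1) e.2

lemma aux15_WE_EdgeConnGE (G : Multigraph) (v : G.V)
    (m : ℕ) (φ : {e : G.E // v ∈ G.ends e} ≃ Fin (m + 3)) (k : ℕ)
    (hk1 : 1 ≤ k) (hk3 : k ≤ 3) (hG : G.EdgeConnGE k) :
    (wheelExtension G v m φ).EdgeConnGE k := by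
  have hdel := fun (F : Set (wheelExtension G v m φ).E) (hF : Nat.card F < k) =>
    aux15_wheelExt_del_conn G v m φ k hk1 hk3 hG F hF
  refine ⟨?_, hdel⟩
  refine aux15_connected_of_deleteEdges (F := ∅) (hdel ∅ ?_)
  have : Nat.card (∅ : Set (wheelExtension G v m φ).E) = 0 := by simp
  omega

end Multigraph

/-!
STATEMENT 15: If `G'` is obtained from a loopless multigraph `G` by a wheel-extension
at a vertex `v` of degree `ℓ ≥ 3`, then `θ(G') ≥ min{θ(G), 3}`.
-/
theorem wheelExtension_edge_connectivity
    (G : Multigraph) (v : G.V) (hdeg : 3 ≤ G.degree v)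
    (G' : Multigraph) (hW : IsWheelExtension G v G') :
    min G.edgeConn 3 ≤ G'.edgeConn := by
  obtain ⟨m, φ, ⟨iso⟩⟩ := hW
  set k := min G.edgeConn 3 with hk
  rcases Nat.eq_zero_or_pos k with h0 | h1
  · rw [h0]
    exact Nat.zero_le _
  · have hkG : k ≤ G.edgeConn := min_le_left _ _
    have hk3 : k ≤ 3 := min_le_right _ _
    have hSmem : G.EdgeConnGE G.edgeConn := by
      by_cases hbdd : BddAbove {j : ℕ | G.EdgeConnGE j}
      · refine Nat.sSup_mem ?_ hbdd
        by_contra hne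
        rw [Set.not_nonempty_iff_eq_empty] at hne
        have : G.edgeConn = 0 := by
          rw [Multigraph.edgeConn, hne, csSup_empty]
          rfl
        omega
      · exfalso
        have : G.edgeConn = 0 := by
          rw [Multigraph.edgeConn, csSup_of_not_bddAbove hbdd, csSup_empty]
          rfl
        omega
    have hGk : G.EdgeConnGE k := Multigraph.aux15_EdgeConnGE_mono hkG hSmem
    have hWk := Multigraph.aux15_WE_EdgeConnGE G v m φ k h1 hk3 hGk
    have hG'k : G'.EdgeConnGE k := Multigraph.aux15_EdgeConnGE_of_iso iso hWk
    have hbdd' : BddAbove {j : ℕ | G'.EdgeConnGE j} := by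
      refine ⟨Nat.card G'.E, ?_⟩
      intro j hj
      by_contra hlt
      push_neg at hlt
      have hcard : Nat.card ↑(Set.univ : Set G'.E) < j := by
        rw [Nat.card_coe_set_eq, Set.ncard_univ]
        exact hlt
      have hconn := hj.2 Set.univ hcard
      have hne : iso.veq.symm (Sum.inr (Sum.inl (0 : Fin (m + 3)))) ≠
          iso.veq.symm (Sum.inr (Sum.inr ((0 : Fin (m + 3)), (0 : Fin 2)))) := by
        intro h
        have := iso.veq.symm.injective h
        exact Sum.inl_ne_inr (Sum.inr_injective this)
      exact hne (Multigraph.aux15_no_edges_reachable (hconn.preconnected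
        (iso.veq.symm (Sum.inr (Sum.inl (0 : Fin (m + 3)))))
        (iso.veq.symm (Sum.inr (Sum.inr ((0 : Fin (m + 3)), (0 : Fin 2)))))))
    exact le_csSup hbdd' hG'k
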